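/- arXiv:2004.11446 — 2 statements merged into one kernel-verified Lean document; each statement's English description precedes it below -/
import Mathlib

section
/- (Direct Form II correctness, the construction underlying the paper's Theorem 1.) Let N ≥ 1, a_1, …, a_N ∈ ℝ, b_0, …, b_N ∈ ℝ, and let x : ℤ → ℝ be a causal input. Let w : ℤ → ℝ be the unique causal sequence satisfying the all-pole recurrence w(n) = x(n) − Σ_{j=1}^{N} a_j·w(n−j) for all n ≥ 0, and define y : ℤ → ℝ by y(n) = Σ_{i=0}^{N} b_i·w(n−i) for n ≥ 0 and y(n) = 0 for n < 0. Then y is the unique causal sequence satisfying the pole-zero recurrence y(n) = Σ_{i=0}^{N} b_i·x(n−i) − Σ_{j=1}^{N} a_j·y(n−j) for all n ≥ 0. In particular, the general pole-zero IIR filter is the composition of an all-pole filter followed by an FIR filter sharing the same internal state sequence w. -/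
/-- A causal sequence vanishes at negative indices. -/
def Causal (u : ℤ → ℝ) : Prop := ∀ n : ℤ, n < 0 → u n = 0

/-- `y` is a causal solution of the pole-zero (general IIR) recurrence. -/
def IsPoleZeroSol (N : ℕ) (a b : ℕ → ℝ) (x y : ℤ → ℝ) : Prop :=
  Causal y ∧ ∀ n : ℤ, 0 ≤ n →
    y n = (∑ i ∈ Finset.range (N + 1), b i * x (n - (i : ℤ)))
        - (∑ j ∈ Finset.range N, a (j + 1) * y (n - ((j : ℤ) + 1)))

/-- `w` is a causal solution of the all-pole recurrence. -/
def IsAllPoleSol (N : ℕ) (a : ℕ → ℝ) (x w : ℤ → ℝ) : Prop :=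
  Causal w ∧ ∀ n : ℤ, 0 ≤ n →
    w n = x n - ∑ j ∈ Finset.range N, a (j + 1) * w (n - ((j : ℤ) + 1))

/-!
The recurrences say that `x = w + A w` (all-pole) and `B x = y + A y` (pole-zero), where
`B u (n) = ∑ b_i u(n - i)` is the feedforward and `A u (n) = ∑ a_j u(n - j)` the feedback
filter. For causal signals the first identity holds at every index, and the two FIR filters
`A` and `B` commute (both are convolutions), so `y := B w` gives
`B x = B w + B (A w) = y + A (B w) = y + A y`.
Uniqueness holds because a causal solution is determined at `n` by its values before `n`.
-/

open Finset

def fir (c : ℕ → ℝ) (M : ℕ) (u : ℤ → ℝ) (n : ℤ) : ℝ :=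
  ∑ i ∈ range M, c i * u (n - i)

def feedback (a : ℕ → ℝ) (N : ℕ) (u : ℤ → ℝ) (n : ℤ) : ℝ :=
  ∑ j ∈ range N, a (j + 1) * u (n - ((j : ℤ) + 1))

theorem fir_add (c : ℕ → ℝ) (M : ℕ) (u v : ℤ → ℝ) :
    fir c M (u + v) = fir c M u + fir c M v := by
  funext n
  simp only [fir, Pi.add_apply, mul_add, sum_add_distrib]

theorem feedback_fir_comm (a c : ℕ → ℝ) (N M : ℕ) (u : ℤ → ℝ) :
    feedback a N (fir c M u) = fir c M (feedback a N u) := by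
  funext n
  simp only [feedback, fir, mul_sum]
  rw [sum_comm]
  refine sum_congr rfl fun i _ => sum_congr rfl fun j _ => ?_
  rw [mul_left_comm, sub_right_comm]

theorem Causal.fir {u : ℤ → ℝ} (hu : Causal u) (c : ℕ → ℝ) (M : ℕ) :
    Causal (fir c M u) := fun n hn =>
  sum_eq_zero fun i _ => by rw [hu _ (by omega), mul_zero]

theorem Causal.feedback {u : ℤ → ℝ} (hu : Causal u) (a : ℕ → ℝ) (N : ℕ) :
    Causal (feedback a N u) := fun n hn =>
  sum_eq_zero fun j _ => by rw [hu _ (by omega), mul_zero]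

theorem Causal.ext_of_lt {u v : ℤ → ℝ} (hu : Causal u) (hv : Causal v)
    (h : ∀ n, 0 ≤ n → (∀ m < n, u m = v m) → u n = v n) : u = v :=
  funext fun n => Int.strongRec (m := 0) (fun k hk => by rw [hu k hk, hv k hk]) h n

theorem IsAllPoleSol.eq_add_feedback {N : ℕ} {a : ℕ → ℝ} {x w : ℤ → ℝ} (hx : Causal x)
    (hw : IsAllPoleSol N a x w) : x = w + feedback a N w := by
  funext n
  rcases lt_or_ge n 0 with hn | hn
  · simp only [Pi.add_apply, hx n hn, hw.1 n hn, Causal.feedback hw.1 a N n hn, add_zero]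
  · rw [Pi.add_apply, hw.2 n hn, feedback, sub_add_cancel]

theorem IsPoleZeroSol.unique {N : ℕ} {a b : ℕ → ℝ} {x y y' : ℤ → ℝ}
    (hy : IsPoleZeroSol N a b x y) (hy' : IsPoleZeroSol N a b x y') : y = y' :=
  Causal.ext_of_lt hy.1 hy'.1 fun n hn hlt => by
    rw [hy.2 n hn, hy'.2 n hn]
    congr 1
    exact sum_congr rfl fun j _ => by rw [hlt _ (by omega)]

theorem isPoleZeroSol_fir_of_isAllPoleSol {N : ℕ} {a : ℕ → ℝ} {x w : ℤ → ℝ}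
    (hx : Causal x) (hw : IsAllPoleSol N a x w) (b : ℕ → ℝ) :
    IsPoleZeroSol N a b x (fir b (N + 1) w) := by
  have hfir : fir b (N + 1) x = fir b (N + 1) w + feedback a N (fir b (N + 1) w) := by
    rw [hw.eq_add_feedback hx, fir_add, feedback_fir_comm]
  refine ⟨Causal.fir hw.1 b (N + 1), fun n _ => ?_⟩
  have := congrFun hfir n
  simp only [Pi.add_apply, fir, feedback] at this ⊢
  linarith

theorem directFormII_correct_general
    (N : ℕ) (a b : ℕ → ℝ) (x : ℤ → ℝ) (hx : Causal x)
    (w : ℤ → ℝ) (hw : IsAllPoleSol N a x w)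
    (y : ℤ → ℝ)
    (hyneg : ∀ n : ℤ, n < 0 → y n = 0)
    (hypos : ∀ n : ℤ, 0 ≤ n →
      y n = ∑ i ∈ Finset.range (N + 1), b i * w (n - (i : ℤ))) :
    IsPoleZeroSol N a b x y ∧
      ∀ y' : ℤ → ℝ, IsPoleZeroSol N a b x y' → y' = y := by
  have hy : y = fir b (N + 1) w := by
    funext n
    rcases lt_or_ge n 0 with hn | hn
    · rw [hyneg n hn, Causal.fir hw.1 b (N + 1) n hn]
    · exact hypos n hn
  subst hy
  have hsol := isPoleZeroSol_fir_of_isAllPoleSol hx hw b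
  exact ⟨hsol, fun y' hy' => hy'.unique hsol⟩

/-- Direct Form II correctness: the FIR combination of the all-pole state `w`
is the unique causal solution of the pole-zero recurrence. -/
theorem directFormII_correct
    (N : ℕ) (hN : 1 ≤ N) (a b : ℕ → ℝ) (x : ℤ → ℝ) (hx : Causal x)
    (w : ℤ → ℝ) (hw : IsAllPoleSol N a x w)
    (y : ℤ → ℝ)
    (hyneg : ∀ n : ℤ, n < 0 → y n = 0)
    (hypos : ∀ n : ℤ, 0 ≤ n →
      y n = ∑ i ∈ Finset.range (N + 1), b i * w (n - (i : ℤ))) :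
    IsPoleZeroSol N a b x y ∧
      ∀ y' : ℤ → ℝ, IsPoleZeroSol N a b x y' → y' = y :=
  directFormII_correct_general N a b x hx w hw y hyneg hypos
end

section
/- (Convolution representation via the impulse response.) Fix N ≥ 1, a_1, …, a_N ∈ ℝ and b_0, …, b_N ∈ ℝ, and let Φ denote the map sending a causal input x : ℤ → ℝ to the unique causal solution y of the pole-zero recurrence. Let δ : ℤ → ℝ be the unit impulse (δ(0) = 1, δ(n) = 0 for n ≠ 0) and let h = Φ(δ) be the impulse response. Then for every causal input x and every n ≥ 0, (Φ x)(n) = Σ_{k=0}^{n} h(k)·x(n−k). -/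
/-- The unit impulse `δ`. -/
def unitImpulse : ℤ → ℝ := fun n => if n = 0 then 1 else 0

/-!
Pass to generating functions: a causal sequence `u` becomes the power series `∑ u(n) Xⁿ`
(its z-transform in `z⁻¹`). For causal `x` the recurrence says exactly `A · Y = B · X` with
`A = 1 + ∑ aⱼ Xʲ` and `B = ∑ bᵢ Xⁱ`. The impulse has series `1`, so `A · H = B`, whence
`A · Y = A · H · X`. As `A` has constant coefficient `1` it is cancellable in the domain `ℝ⟦X⟧`,
so `Y = H · X`, and reading off the `n`-th coefficient of the product gives the convolution.
-/

open PowerSeries Finset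

noncomputable def toPowerSeries (u : ℤ → ℝ) : ℝ⟦X⟧ := PowerSeries.mk fun n => u n

@[simp]
theorem coeff_toPowerSeries (u : ℤ → ℝ) (n : ℕ) : coeff n (toPowerSeries u) = u n :=
  coeff_mk _ _

theorem coeff_toPowerSeries_mul (u v : ℤ → ℝ) (n : ℕ) :
    coeff n (toPowerSeries u * toPowerSeries v) =
      ∑ k ∈ range (n + 1), u k * v ((n : ℤ) - k) := by
  rw [coeff_mul, Nat.sum_antidiagonal_eq_sum_range_succ_mk]
  refine sum_congr rfl fun k hk => ?_
  have hkn : k ≤ n := Nat.lt_succ_iff.mp (mem_range.mp hk)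
  simp [Nat.cast_sub hkn]

theorem toPowerSeries_unitImpulse : toPowerSeries unitImpulse = 1 := by
  ext n
  simp [unitImpulse, coeff_one]

theorem causal_unitImpulse : Causal unitImpulse := fun _ hn => if_neg hn.ne

namespace Causal

variable {u : ℤ → ℝ}

theorem coeff_X_pow_mul_toPowerSeries (hu : Causal u) (i n : ℕ) :
    coeff n (X ^ i * toPowerSeries u) = u ((n : ℤ) - i) := by
  rw [coeff_X_pow_mul']
  split_ifs with hin
  · simp [Nat.cast_sub hin]
  · exact (hu _ (by omega)).symm

theorem coeff_sum_mul_toPowerSeries (hu : Causal u) (s : Finset ℕ) (c : ℕ → ℝ) (e : ℕ → ℕ)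
    (n : ℕ) :
    coeff n ((∑ i ∈ s, C (c i) * X ^ e i) * toPowerSeries u) =
      ∑ i ∈ s, c i * u ((n : ℤ) - e i) := by
  simp only [sum_mul, map_sum, mul_assoc, coeff_C_mul, hu.coeff_X_pow_mul_toPowerSeries]

end Causal

noncomputable def feedforwardSeries (N : ℕ) (b : ℕ → ℝ) : ℝ⟦X⟧ :=
  ∑ i ∈ range (N + 1), C (b i) * X ^ i

noncomputable def feedbackSeries (N : ℕ) (a : ℕ → ℝ) : ℝ⟦X⟧ :=
  1 + ∑ j ∈ range N, C (a (j + 1)) * X ^ (j + 1)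

theorem feedbackSeries_ne_zero (N : ℕ) (a : ℕ → ℝ) : feedbackSeries N a ≠ 0 := by
  intro h
  simpa [feedbackSeries] using congrArg constantCoeff h

namespace IsPoleZeroSol

variable {N : ℕ} {a b : ℕ → ℝ} {x y : ℤ → ℝ}

theorem feedbackSeries_mul (hy : IsPoleZeroSol N a b x y) (hx : Causal x) :
    feedbackSeries N a * toPowerSeries y = feedforwardSeries N b * toPowerSeries x := by
  ext n
  have hrec := hy.2 n n.cast_nonneg
  rw [feedbackSeries, feedforwardSeries, add_mul, one_mul, map_add,
    hy.1.coeff_sum_mul_toPowerSeries, hx.coeff_sum_mul_toPowerSeries, coeff_toPowerSeries]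
  push_cast
  linarith

theorem toPowerSeries_eq_mul {h : ℤ → ℝ} (hh : IsPoleZeroSol N a b unitImpulse h)
    (hy : IsPoleZeroSol N a b x y) (hx : Causal x) :
    toPowerSeries y = toPowerSeries h * toPowerSeries x := by
  have hH : feedbackSeries N a * toPowerSeries h = feedforwardSeries N b := by
    simpa [toPowerSeries_unitImpulse] using hh.feedbackSeries_mul causal_unitImpulse
  refine mul_left_cancel₀ (feedbackSeries_ne_zero N a) ?_
  rw [hy.feedbackSeries_mul hx, ← mul_assoc, hH]

end IsPoleZeroSol

theorem pole_zero_filter_convolution_general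
    (N : ℕ) (a b : ℕ → ℝ)
    (Φ : (ℤ → ℝ) → (ℤ → ℝ))
    (hΦ : ∀ x : ℤ → ℝ, Causal x → IsPoleZeroSol N a b x (Φ x))
    (x : ℤ → ℝ) (hx : Causal x) :
    ∀ n : ℤ, 0 ≤ n →
      Φ x n = ∑ k ∈ Finset.range (n.toNat + 1),
        Φ unitImpulse (k : ℤ) * x (n - (k : ℤ)) := by
  intro n hn
  lift n to ℕ using hn
  have hY := (hΦ unitImpulse causal_unitImpulse).toPowerSeries_eq_mul (hΦ x hx) hx
  simpa [coeff_toPowerSeries_mul] using congrArg (coeff n) hY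

/-- Convolution representation of the pole-zero filter `Φ` via its impulse
response `h = Φ δ`: for `n ≥ 0`, `(Φ x)(n) = ∑_{k=0}^{n} h(k)·x(n−k)`. -/
theorem pole_zero_filter_convolution
    (N : ℕ) (hN : 1 ≤ N) (a b : ℕ → ℝ)
    (Φ : (ℤ → ℝ) → (ℤ → ℝ))
    (hΦ : ∀ x : ℤ → ℝ, Causal x → IsPoleZeroSol N a b x (Φ x))
    (x : ℤ → ℝ) (hx : Causal x) :
    ∀ n : ℤ, 0 ≤ n →
      Φ x n = ∑ k ∈ Finset.range (n.toNat + 1),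
        Φ unitImpulse (k : ℤ) * x (n - (k : ℤ)) :=
  pole_zero_filter_convolution_general N a b Φ hΦ x hx
end
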